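/- Let r ≥ 3 and let F be an r-uniform r-partite linear hypergraph with parts V₁, …, V_r, each of size n, containing no Berge triangle and no Berge-K_{2,3}. Then the number m of edges of F satisfies 2r·C(n,2) ≥ r(r-1)·n·(m/n)((m/n) - 1)/2, and consequently m ≤ √(2/(r-1))·n^{3/2} + n. -/

import Mathlib

/-- A Berge triangle in a hypergraph. -/
def BergeTriangle {V : Type*} (H : Finset (Finset V)) : Prop :=
  ∃ (v₁ v₂ v₃ : V) (e₁ e₂ e₃ : Finset V),
    v₁ ≠ v₂ ∧ v₂ ≠ v₃ ∧ v₁ ≠ v₃ ∧ e₁ ≠ e₂ ∧ e₂ ≠ e₃ ∧ e₁ ≠ e₃ ∧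
    e₁ ∈ H ∧ e₂ ∈ H ∧ e₃ ∈ H ∧
    v₁ ∈ e₁ ∧ v₂ ∈ e₁ ∧ v₂ ∈ e₂ ∧ v₃ ∈ e₂ ∧ v₃ ∈ e₃ ∧ v₁ ∈ e₃

/-- A Berge-K_{2,t} in a hypergraph. -/
def BergeK2 {V : Type*} (t : ℕ) (H : Finset (Finset V)) : Prop :=
  ∃ (x y : V) (v : Fin t → V) (e f : Fin t → Finset V),
    Function.Injective v ∧ x ≠ y ∧ (∀ i, x ≠ v i) ∧ (∀ i, y ≠ v i) ∧
    (∀ i, e i ∈ H) ∧ (∀ i, f i ∈ H) ∧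
    Function.Injective e ∧ Function.Injective f ∧ (∀ i j, e i ≠ f j) ∧
    (∀ i, x ∈ e i ∧ v i ∈ e i ∧ y ∈ f i ∧ v i ∈ f i)

/-!
Double count the incidences between cherries (a vertex `v` with an ordered pair of distinct
edges `e, f` through it) and ordered pairs `u ≠ w` lying in a common part, where the cherry is
incident to `(u, w)` when `u ∈ e` and `w ∈ f`. By linearity every cherry is incident to a pair
in each of the `r - 1` parts avoiding `v`. Conversely, linearity makes a cherry incident to
`(u, w)` determined by its centre `v`, and three such centres would span a Berge-`K_{2,3}`: the
six edges are distinct because the hypergraph is linear and has no Berge triangle. Hence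
`(r - 1) ∑ d(v) (d(v) - 1) ≤ 2 r n (n - 1)`. Since every edge meets each part once, the degrees
in each part sum to `m`, so Cauchy–Schwarz gives `n ∑ d(v)² ≥ r m²`, which yields the quadratic
inequality `(r - 1) (m² - n m) ≤ 2 n² (n - 1)` behind both bounds.
-/

open Finset

namespace Hypergraph

section Linear

variable {V : Type*} [DecidableEq V] {H : Finset (Finset V)}

def IsLinear (H : Finset (Finset V)) : Prop :=
  ∀ e ∈ H, ∀ f ∈ H, e ≠ f → #(e ∩ f) ≤ 1

theorem IsLinear.eq_of_mem_of_mem (hH : IsLinear H) {e f : Finset V} {a b : V}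
    (he : e ∈ H) (hf : f ∈ H) (hab : a ≠ b) (hae : a ∈ e) (hbe : b ∈ e) (haf : a ∈ f)
    (hbf : b ∈ f) : e = f := by
  by_contra hef
  have hle := hH e he f hf hef
  have hlt : 1 < #(e ∩ f) :=
    one_lt_card.mpr ⟨a, mem_inter.mpr ⟨hae, haf⟩, b, mem_inter.mpr ⟨hbe, hbf⟩, hab⟩
  omega

theorem IsLinear.bergeTriangle_of_common_neighbour (hH : IsLinear H) {e f f' : Finset V}
    {v v' w : V} (he : e ∈ H) (hf : f ∈ H) (hf' : f' ∈ H) (hef : e ≠ f) (hef' : e ≠ f')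
    (hvv' : v ≠ v') (hwv : w ≠ v) (hwv' : w ≠ v') (hve : v ∈ e) (hv'e : v' ∈ e)
    (hvf : v ∈ f) (hwf : w ∈ f) (hv'f' : v' ∈ f') (hwf' : w ∈ f') : BergeTriangle H := by
  have hff' : f ≠ f' := fun h ↦ hef (hH.eq_of_mem_of_mem he hf hvv' hve hv'e hvf (h ▸ hv'f'))
  exact ⟨v, v', w, e, f', f, hvv', hwv'.symm, hwv.symm, hef', hff'.symm, hef, he, hf', hf,
    hve, hv'e, hv'f', hwf', hwf, hvf⟩

theorem IsLinear.bergeK2_of_paths (hH : IsLinear H) (hC3 : ¬ BergeTriangle H) {t : ℕ} {u w : V}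
    {v : Fin t → V} {e f : Fin t → Finset V} (huw : u ≠ w) (hv : Function.Injective v)
    (hu : ∀ i, u ≠ v i) (hw : ∀ i, w ≠ v i) (he : ∀ i, e i ∈ H) (hf : ∀ i, f i ∈ H)
    (hef : ∀ i, e i ≠ f i) (hmem : ∀ i, u ∈ e i ∧ v i ∈ e i ∧ w ∈ f i ∧ v i ∈ f i) :
    BergeK2 t H := by
  refine ⟨u, w, v, e, f, hv, huw, hu, hw, he, hf, ?_, ?_, ?_, hmem⟩
  · intro i j hij
    by_contra hne
    exact hC3 (hH.bergeTriangle_of_common_neighbour (he i) (hf i) (hf j) (hef i) (hij ▸ hef j)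
      (hv.ne hne) (hw i) (hw j) (hmem i).2.1 (hij ▸ (hmem j).2.1) (hmem i).2.2.2 (hmem i).2.2.1
      (hmem j).2.2.2 (hmem j).2.2.1)
  · intro i j hij
    by_contra hne
    exact hC3 (hH.bergeTriangle_of_common_neighbour (hf i) (he i) (he j) (hef i).symm
      (hij ▸ (hef j).symm) (hv.ne hne) (hu i) (hu j) (hmem i).2.2.2 (hij ▸ (hmem j).2.2.2)
      (hmem i).2.1 (hmem i).1 (hmem j).2.1 (hmem j).1)
  · intro i j hij
    -- `e i = f j` would put `u` and `v j` into both `e j` and `f j`.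
    exact hef j (hH.eq_of_mem_of_mem (he j) (hf j) (hu j) (hmem j).1 (hmem j).2.1
      (hij ▸ (hmem i).1) (hmem j).2.2.2)

end Linear

section Partite

variable {V ι : Type*} [DecidableEq ι] {H : Finset (Finset V)} {part : V → ι}

def IsPartite (part : V → ι) (H : Finset (Finset V)) : Prop :=
  ∀ e ∈ H, ∀ i, #{v ∈ e | part v = i} = 1

theorem IsPartite.exists_mem (hH : IsPartite part H) {e : Finset V} (he : e ∈ H) (i : ι) :
    ∃ v ∈ e, part v = i := by
  obtain ⟨v, hv⟩ := card_pos.mp (hH e he i ▸ Nat.one_pos)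
  exact ⟨v, (mem_filter.mp hv).1, (mem_filter.mp hv).2⟩

theorem IsPartite.eq_of_mem (hH : IsPartite part H) {e : Finset V} (he : e ∈ H) {a b : V}
    (ha : a ∈ e) (hb : b ∈ e) (hab : part a = part b) : a = b :=
  card_le_one.mp (hH e he (part b)).le a (mem_filter.mpr ⟨ha, hab⟩) b (mem_filter.mpr ⟨hb, rfl⟩)

def degree [DecidableEq V] (H : Finset (Finset V)) (v : V) : ℕ := #{e ∈ H | v ∈ e}

theorem IsPartite.sum_degree [Fintype V] [DecidableEq V] (hH : IsPartite part H) (i : ι) :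
    ∑ v with part v = i, degree H v = #H := by
  refine (sum_card_bipartiteAbove_eq_sum_card_bipartiteBelow (fun v e ↦ v ∈ e)).trans ?_
  rw [card_eq_sum_ones H]
  refine sum_congr rfl fun e he ↦ ?_
  rw [← hH e he i]
  congr 1
  ext v
  simp [bipartiteBelow, and_comm]

variable [Fintype V] [Fintype ι]

def sameSidePairs (part : V → ι) : Finset (Σ _ : ι, V × V) :=
  univ.sigma fun i ↦ ({v | part v = i} : Finset V).offDiag

@[simp]
theorem mem_sameSidePairs {i : ι} {u w : V} :
    ⟨i, (u, w)⟩ ∈ sameSidePairs part ↔ part u = i ∧ part w = i ∧ u ≠ w := by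
  simp [sameSidePairs]

theorem card_sameSidePairs {n : ℕ} (hpart : ∀ i, #({v | part v = i} : Finset V) = n) :
    #(sameSidePairs part) = Fintype.card ι * (n * n - n) := by
  simp [sameSidePairs, card_sigma, offDiag_card, hpart]

end Partite

section Cherries

variable {V ι : Type*} [Fintype V] [DecidableEq V] {H : Finset (Finset V)}

def cherries (H : Finset (Finset V)) : Finset (Σ _ : V, Finset V × Finset V) :=
  univ.sigma fun v ↦ {e ∈ H | v ∈ e}.offDiag

@[simp]
theorem mem_cherries {v : V} {e f : Finset V} :
    ⟨v, (e, f)⟩ ∈ cherries H ↔ (e ∈ H ∧ v ∈ e) ∧ (f ∈ H ∧ v ∈ f) ∧ e ≠ f := by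
  simp [cherries]

theorem card_cherries_add_sum_degree (H : Finset (Finset V)) :
    #(cherries H) + ∑ v, degree H v = ∑ v, degree H v ^ 2 := by
  rw [cherries, card_sigma, ← sum_add_distrib]
  refine sum_congr rfl fun v _ ↦ ?_
  rw [offDiag_card, ← degree, Nat.sub_add_cancel (Nat.le_mul_self _), sq]

/-- The cherry `⟨v, (e, f)⟩` joins `⟨i, (u, w)⟩` when `u -e- v -f- w` is a Berge path. -/
abbrev Joins (a : Σ _ : V, Finset V × Finset V) (b : Σ _ : ι, V × V) : Prop :=
  b.2.1 ∈ a.2.1 ∧ b.2.2 ∈ a.2.2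

variable [Fintype ι] [DecidableEq ι] {part : V → ι}

theorem IsLinear.card_sub_one_le_card_bipartiteAbove (hL : IsLinear H) (hP : IsPartite part H)
    {a : Σ _ : V, Finset V × Finset V} (ha : a ∈ cherries H) :
    Fintype.card ι - 1 ≤ #((sameSidePairs part).bipartiteAbove Joins a) := by
  obtain ⟨v, e, f⟩ := a
  obtain ⟨⟨he, hve⟩, ⟨hf, hvf⟩, hef⟩ := mem_cherries.mp ha
  rw [← card_univ, ← card_erase_of_mem (mem_univ (part v))]
  refine card_le_card_of_surjOn Sigma.fst fun i hi ↦ ?_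
  obtain ⟨u, hu, rfl⟩ := hP.exists_mem he i
  obtain ⟨w, hw, hpw⟩ := hP.exists_mem hf (part u)
  have huv : u ≠ v := fun h ↦ (mem_erase.mp hi).1 (h ▸ rfl)
  have huw : u ≠ w := by
    rintro rfl
    exact hef (hL.eq_of_mem_of_mem he hf huv hu hve hw hvf)
  exact ⟨⟨part u, (u, w)⟩,
    (mem_bipartiteAbove _).mpr ⟨mem_sameSidePairs.mpr ⟨rfl, hpw, huw⟩, hu, hw⟩, rfl⟩

theorem IsPartite.ne_center_of_joins (hP : IsPartite part H) {v : V} {e f : Finset V} {i : ι}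
    {u w : V} (ha : ⟨v, (e, f)⟩ ∈ cherries H) (hb : ⟨i, (u, w)⟩ ∈ sameSidePairs part)
    (hj : u ∈ e ∧ w ∈ f) : u ≠ v ∧ w ≠ v := by
  obtain ⟨⟨he, hve⟩, ⟨hf, hvf⟩, -⟩ := mem_cherries.mp ha
  obtain ⟨hu, hw, huw⟩ := mem_sameSidePairs.mp hb
  refine ⟨fun h ↦ huw ?_, fun h ↦ huw ?_⟩
  · subst h
    exact hP.eq_of_mem hf hvf hj.2 (hu.trans hw.symm)
  · subst h
    exact hP.eq_of_mem he hj.1 hve (hu.trans hw.symm)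

theorem IsLinear.eq_of_joins (hL : IsLinear H) (hP : IsPartite part H)
    {a a' : Σ _ : V, Finset V × Finset V} {b : Σ _ : ι, V × V}
    (ha : a ∈ (cherries H).bipartiteBelow Joins b)
    (ha' : a' ∈ (cherries H).bipartiteBelow Joins b)
    (hb : b ∈ sameSidePairs part) (hcenter : a.1 = a'.1) : a = a' := by
  obtain ⟨v, e, f⟩ := a
  obtain ⟨v', e', f'⟩ := a'
  obtain ⟨i, u, w⟩ := b
  obtain ⟨hmem, hj⟩ := (mem_bipartiteBelow _).mp ha
  obtain ⟨hmem', hj'⟩ := (mem_bipartiteBelow _).mp ha'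
  obtain rfl : v = v' := hcenter
  obtain ⟨⟨he, hve⟩, ⟨hf, hvf⟩, -⟩ := mem_cherries.mp hmem
  obtain ⟨⟨he', hve'⟩, ⟨hf', hvf'⟩, -⟩ := mem_cherries.mp hmem'
  obtain ⟨huv, hwv⟩ := hP.ne_center_of_joins hmem hb hj
  obtain rfl := hL.eq_of_mem_of_mem he he' huv hj.1 hve hj'.1 hve'
  obtain rfl := hL.eq_of_mem_of_mem hf hf' hwv hj.2 hvf hj'.2 hvf'
  rfl

theorem IsLinear.bergeK2_of_le_card_bipartiteBelow (hL : IsLinear H) (hP : IsPartite part H)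
    (hC3 : ¬ BergeTriangle H) {t : ℕ} {b : Σ _ : ι, V × V} (hb : b ∈ sameSidePairs part)
    (ht : t ≤ #((cherries H).bipartiteBelow Joins b)) : BergeK2 t H := by
  set S := (cherries H).bipartiteBelow Joins b
  obtain ⟨g⟩ := Function.Embedding.nonempty_of_card_le (α := Fin t) (β := S) (by simpa using ht)
  obtain ⟨i, u, w⟩ := b
  have hpath (k : Fin t) : ((g k).1.2.1 ∈ H ∧ (g k).1.2.2 ∈ H ∧ (g k).1.2.1 ≠ (g k).1.2.2) ∧
      (u ≠ (g k).1.1 ∧ w ≠ (g k).1.1) ∧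
      u ∈ (g k).1.2.1 ∧ (g k).1.1 ∈ (g k).1.2.1 ∧ w ∈ (g k).1.2.2 ∧ (g k).1.1 ∈ (g k).1.2.2 := by
    obtain ⟨⟨v, e, f⟩, hS⟩ := g k
    obtain ⟨hmem, hj⟩ := (mem_bipartiteBelow _).mp hS
    obtain ⟨⟨he, hve⟩, ⟨hf, hvf⟩, hef⟩ := mem_cherries.mp hmem
    exact ⟨⟨he, hf, hef⟩, hP.ne_center_of_joins hmem hb hj, hj.1, hve, hj.2, hvf⟩
  refine hL.bergeK2_of_paths hC3 (mem_sameSidePairs.mp hb).2.2 (fun k l hkl ↦ ?_)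
    (fun k ↦ (hpath k).2.1.1) (fun k ↦ (hpath k).2.1.2) (fun k ↦ (hpath k).1.1)
    (fun k ↦ (hpath k).1.2.1) (fun k ↦ (hpath k).1.2.2) (fun k ↦ (hpath k).2.2)
  exact g.injective (Subtype.ext (hL.eq_of_joins hP (g k).2 (g l).2 hb hkl))

theorem IsLinear.card_cherries_mul_le (hL : IsLinear H) (hP : IsPartite part H)
    (hC3 : ¬ BergeTriangle H) (hK23 : ¬ BergeK2 3 H) :
    #(cherries H) * (Fintype.card ι - 1) ≤ #(sameSidePairs part) * 2 :=
  card_mul_le_card_mul Joins (fun _ ha ↦ hL.card_sub_one_le_card_bipartiteAbove hP ha)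
    fun _ hb ↦ Nat.le_of_lt_succ <| lt_of_not_ge fun h ↦
      hK23 (hL.bergeK2_of_le_card_bipartiteBelow hP hC3 hb h)

end Cherries

end Hypergraph

theorem card_mul_sq_le_mul_sum_sq {V ι : Type*} [Fintype V] [Fintype ι] [DecidableEq ι]
    {part : V → ι} {n m : ℕ} (g : V → ℕ) (hpart : ∀ i, #({v | part v = i} : Finset V) = n)
    (hg : ∀ i, ∑ v with part v = i, g v = m) :
    Fintype.card ι * m ^ 2 ≤ n * ∑ v, g v ^ 2 := by
  rw [← sum_fiberwise univ part, mul_sum, ← smul_eq_mul, ← card_univ, ← sum_const]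
  refine sum_le_sum fun i _ ↦ ?_
  rw [← hg i, ← hpart i]
  exact sq_sum_le_card_mul_sum_sq

theorem sub_one_mul_sq_sub_le {r n m c : ℕ} (hr : 1 ≤ r)
    (hcount : c * (r - 1) ≤ r * (n * n - n) * 2) (hCS : r * m ^ 2 ≤ n * (c + r * m)) :
    ((r : ℝ) - 1) * ((m : ℝ) ^ 2 - n * m) ≤ 2 * (n : ℝ) ^ 2 * (n - 1) := by
  have hcount' := (Nat.cast_le (α := ℝ)).mpr hcount
  push_cast [Nat.cast_sub hr, Nat.cast_sub (Nat.le_mul_self n)] at hcount'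
  have hCS' := (Nat.cast_le (α := ℝ)).mpr hCS
  push_cast at hCS'
  have hr' : (1 : ℝ) ≤ r := by exact_mod_cast hr
  refine le_of_mul_le_mul_left ?_ (by linarith : (0 : ℝ) < r)
  nlinarith [mul_le_mul_of_nonneg_left hCS' (by linarith : (0 : ℝ) ≤ r - 1),
    mul_le_mul_of_nonneg_left hcount' (Nat.cast_nonneg n : (0 : ℝ) ≤ n)]

theorem mul_choose_two_bound {r n m : ℝ} (hr : 0 ≤ r) (hn : 0 ≤ n)
    (h : (r - 1) * (m ^ 2 - n * m) ≤ 2 * n ^ 2 * (n - 1)) :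
    r * (r - 1) * n * ((m / n) * (m / n - 1)) / 2 ≤ 2 * r * (n * (n - 1) / 2) := by
  rcases hn.eq_or_lt with rfl | hn
  · simp
  have hm : n * ((m / n) * (m / n - 1)) = (m ^ 2 - n * m) / n := by field_simp
  rw [mul_assoc _ n, hm]
  have : (r - 1) * ((m ^ 2 - n * m) / n) ≤ 2 * n * (n - 1) := by
    rw [← mul_div_assoc, div_le_iff₀ hn]
    nlinarith
  nlinarith

theorem le_sqrt_mul_rpow_add {c n m : ℝ} (hc : 0 < c) (hn : 0 ≤ n)
    (h : c * (m ^ 2 - n * m) ≤ 2 * n ^ 2 * (n - 1)) :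
    m ≤ Real.sqrt (2 / c) * n ^ ((3 : ℝ) / 2) + n := by
  rcases le_or_gt m n with hmn | hmn
  · have : 0 ≤ Real.sqrt (2 / c) * n ^ ((3 : ℝ) / 2) := by positivity
    linarith
  have hsq : (m - n) ^ 2 ≤ 2 / c * n ^ 3 := by
    rw [div_mul_eq_mul_div, le_div_iff₀ hc]
    nlinarith [mul_nonneg hn (sub_nonneg.mpr hmn.le)]
  have hrpow : n ^ ((3 : ℝ) / 2) = Real.sqrt (n ^ 3) := by
    rw [Real.sqrt_eq_rpow, ← Real.rpow_natCast, ← Real.rpow_mul hn]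
    norm_num
  rw [hrpow, ← Real.sqrt_mul (by positivity)]
  linarith [Real.le_sqrt_of_sq_le hsq]

open Hypergraph in
theorem stmt_10 {V : Type*} [Fintype V] [DecidableEq V]
    (r n m : ℕ) (hr : 3 ≤ r)
    (part : V → Fin r)
    (hparts : ∀ i, (Finset.univ.filter (fun v => part v = i)).card = n)
    (H : Finset (Finset V)) (hm : H.card = m)
    (hpartite : ∀ e ∈ H, ∀ i, (e.filter (fun v => part v = i)).card = 1)
    (hlinear : ∀ e ∈ H, ∀ f ∈ H, e ≠ f → (e ∩ f).card ≤ 1)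
    (hC3 : ¬ BergeTriangle H)
    (hK23 : ¬ BergeK2 3 H) :
    2 * (r : ℝ) * (n.choose 2) ≥
      (r : ℝ) * ((r : ℝ) - 1) * n * (((m : ℝ) / n) * ((m : ℝ) / n - 1)) / 2 ∧
    (m : ℝ) ≤ Real.sqrt (2 / ((r : ℝ) - 1)) * (n : ℝ) ^ ((3 : ℝ) / 2) + n := by
  have hP : IsPartite part H := hpartite
  have hL : IsLinear H := hlinear
  have hdeg (i : Fin r) : ∑ v with part v = i, degree H v = m := hm ▸ hP.sum_degree i
  have hcount := hL.card_cherries_mul_le hP hC3 hK23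
  rw [card_sameSidePairs hparts, Fintype.card_fin] at hcount
  have hsq := card_cherries_add_sum_degree H
  rw [← sum_fiberwise univ part, sum_congr rfl fun i _ ↦ hdeg i, sum_const, card_univ,
    Fintype.card_fin, smul_eq_mul] at hsq
  have hCS := card_mul_sq_le_mul_sum_sq (degree H) hparts hdeg
  rw [Fintype.card_fin, ← hsq] at hCS
  have key := sub_one_mul_sq_sub_le (by omega) hcount hCS
  have hr' : (1 : ℝ) < r := by exact_mod_cast (by omega : 1 < r)
  rw [ge_iff_le, Nat.cast_choose_two]
  exact ⟨mul_choose_two_bound (by positivity) (by positivity) key,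
    le_sqrt_mul_rpow_add (by linarith) (by positivity) key⟩
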